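/- For every τ > 0 and τ' > 0 there exists a constant C > 0 (depending only on τ and τ') with the following property: for all real time nodes t₋₂ < t₋₁ < t₀ < t₁ with steps k₁ = t₁ − t₀, k₀ = t₀ − t₋₁, k₋₁ = t₋₁ − t₋₂ satisfying k₁/k₀ = τ and k₀/k₋₁ = τ', and every four-times continuously differentiable function u : ℝ → E into a real Hilbert space E, one has ‖(1/k₁)·(β₃(u(t₁) − u(t₀)) − β₂(u(t₀) − u(t₋₁)) + β₁(u(t₋₁) − u(t₋₂))) − u'(t₁)‖² ≤ C · k₁⁵ · ∫_{t₋₂}^{t₁} ‖u⁗(t)‖² dt, where u' and u⁗ denote the first and fourth derivatives of u. (This is the consistency estimate (Lemma 3, first inequality) for the variable-step BDF2-TF operator 𝒜.) -/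

import Mathlib

open intervalIntegral MeasureTheory



/-- BDF2-TF β-coefficients. -/
noncomputable def beta3 (τ τ' : ℝ) : ℝ :=
  1 + τ / (1 + τ) + τ * τ' / (1 + τ' * (1 + τ))
noncomputable def beta2 (τ τ' : ℝ) : ℝ :=
  τ ^ 2 / (1 + τ) + τ ^ 2 * τ' * (1 + τ' * (2 + τ)) / ((1 + τ') * (1 + τ' * (1 + τ)))
noncomputable def beta1 (τ τ' : ℝ) : ℝ :=
  τ ^ 2 * τ' ^ 3 * (1 + τ) / ((1 + τ') * (1 + τ' * (1 + τ)))

section aux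
variable {E : Type*} [NormedAddCommGroup E] [NormedSpace ℝ E] [CompleteSpace E]

lemma taylor_rem (u : ℝ → E) (hu : ContDiff ℝ 4 u) (a x : ℝ) :
    u x = u a + (x - a) • iteratedDeriv 1 u a + ((x - a) ^ 2 / 2) • iteratedDeriv 2 u a
      + ((x - a) ^ 3 / 6) • iteratedDeriv 3 u a
      + ∫ t in a..x, ((x - t) ^ 3 / 6) • iteratedDeriv 4 u t := by
  set g : ℝ → E := fun t => u t + (x - t) • iteratedDeriv 1 u t
      + ((x - t) ^ 2 / 2) • iteratedDeriv 2 u t + ((x - t) ^ 3 / 6) • iteratedDeriv 3 u t with hg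
  have hd : ∀ i : ℕ, i < 4 → ∀ t : ℝ, HasDerivAt (iteratedDeriv i u) (iteratedDeriv (i+1) u t) t := by
    intro i hi t
    have h1 : DifferentiableAt ℝ (iteratedDeriv i u) t :=
      (hu.differentiable_iteratedDeriv i (by exact_mod_cast hi)) t
    simpa [iteratedDeriv_succ] using h1.hasDerivAt
  have hg' : ∀ t : ℝ, HasDerivAt g (((x - t) ^ 3 / 6) • iteratedDeriv 4 u t) t := by
    intro t
    have h0 : HasDerivAt u (iteratedDeriv 1 u t) t := by
      simpa [iteratedDeriv_one] using (hd 0 (by norm_num) t)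
    have hc1 : HasDerivAt (fun s : ℝ => x - s) (-1) t := by
      simpa using ((hasDerivAt_id t).const_sub x)
    have hc2 : HasDerivAt (fun s : ℝ => (x - s) ^ 2 / 2) (-(x - t)) t := by
      have := (hc1.pow 2).div_const 2
      exact this.congr_deriv (by ring)
    have hc3 : HasDerivAt (fun s : ℝ => (x - s) ^ 3 / 6) (-((x - t) ^ 2 / 2)) t := by
      have := (hc1.pow 3).div_const 6
      exact this.congr_deriv (by ring)
    have h1 := hc1.smul (hd 1 (by norm_num) t)
    have h2 := hc2.smul (hd 2 (by norm_num) t)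
    have h3 := hc3.smul (hd 3 (by norm_num) t)
    have := ((h0.add h1).add h2).add h3
    convert this using 1
    · rfl
    simp only [neg_one_smul, neg_smul]
    module
  have hcont : Continuous fun t => ((x - t) ^ 3 / 6) • iteratedDeriv 4 u t := by
    exact (Continuous.div_const (by continuity) 6).smul (hu.continuous_iteratedDeriv 4 le_rfl)
  have hftc := intervalIntegral.integral_eq_sub_of_hasDerivAt (f := g)
      (fun t _ => hg' t) (hcont.intervalIntegrable a x)
  have hgx : g x = u x := by simp [hg]
  have key : u x = g a + ∫ t in a..x, ((x - t) ^ 3 / 6) • iteratedDeriv 4 u t := by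
    rw [← hgx, hftc]; abel
  exact key

lemma rem_bound (u : ℝ → E) (hu : ContDiff ℝ 4 u) (tm2 t1 x : ℝ)
    (h2x : tm2 ≤ x) (hx1 : x ≤ t1) :
    ‖∫ t in t1..x, ((x - t) ^ 3 / 6) • iteratedDeriv 4 u t‖
      ≤ ((t1 - tm2) ^ 3 / 6) * ∫ t in tm2..t1, ‖iteratedDeriv 4 u t‖ := by
  have hcont4 : Continuous (iteratedDeriv 4 u) := hu.continuous_iteratedDeriv 4 le_rfl
  rw [intervalIntegral.integral_symm, norm_neg]
  calc ‖∫ t in x..t1, ((x - t) ^ 3 / 6) • iteratedDeriv 4 u t‖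
      ≤ ∫ t in x..t1, ‖((x - t) ^ 3 / 6) • iteratedDeriv 4 u t‖ :=
        intervalIntegral.norm_integral_le_integral_norm hx1
    _ ≤ ∫ t in x..t1, ((t1 - tm2) ^ 3 / 6) * ‖iteratedDeriv 4 u t‖ := by
        apply intervalIntegral.integral_mono_on hx1
        · exact (Continuous.norm ((Continuous.div_const (by continuity) 6).smul hcont4)).intervalIntegrable x t1
        · exact (Continuous.mul continuous_const hcont4.norm).intervalIntegrable x t1
        · intro t ht
          rw [norm_smul]
          apply mul_le_mul_of_nonneg_right _ (norm_nonneg _)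
          rw [Real.norm_eq_abs, abs_div, abs_pow]
          have h1 : |x - t| ≤ t1 - tm2 := by
            rw [abs_sub_comm, abs_of_nonneg (by linarith [ht.1])]
            have := ht.2; linarith
          have h2 : (0:ℝ) ≤ t1 - tm2 := by linarith
          calc |x - t| ^ 3 / |6| ≤ (t1 - tm2) ^ 3 / |6| := by
                apply div_le_div_of_nonneg_right ?_ (by norm_num)
                exact pow_le_pow_left₀ (abs_nonneg _) h1 3
            _ = (t1 - tm2) ^ 3 / 6 := by norm_num
    _ = ((t1 - tm2) ^ 3 / 6) * ∫ t in x..t1, ‖iteratedDeriv 4 u t‖ := by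
        rw [intervalIntegral.integral_const_mul]
    _ ≤ ((t1 - tm2) ^ 3 / 6) * ∫ t in tm2..t1, ‖iteratedDeriv 4 u t‖ := by
        have hnn : (0:ℝ) ≤ t1 - tm2 := by linarith
        apply mul_le_mul_of_nonneg_left _ (by positivity)
        apply intervalIntegral.integral_mono_interval h2x hx1 le_rfl
        · exact Filter.Eventually.of_forall fun t => norm_nonneg _
        · exact hcont4.norm.intervalIntegrable tm2 t1
end aux

lemma sq_integral_le (f : ℝ → ℝ) (hf : Continuous f) {a b : ℝ} (hab : a ≤ b) :
    (∫ t in a..b, f t) ^ 2 ≤ (b - a) * ∫ t in a..b, f t ^ 2 := by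
  set J := ∫ t in a..b, f t with hJ
  set I := ∫ t in a..b, f t ^ 2 with hI
  set L := b - a with hL
  have hL0 : 0 ≤ L := by simp [hL]; linarith
  have hint : ∀ g : ℝ → ℝ, Continuous g → IntervalIntegrable g volume a b :=
    fun g hg => hg.intervalIntegrable a b
  have h0 : 0 ≤ ∫ t in a..b, (L * f t - J) ^ 2 :=
    intervalIntegral.integral_nonneg hab (fun t _ => sq_nonneg _)
  have hexp : (∫ t in a..b, (L * f t - J) ^ 2)
      = L ^ 2 * I - 2 * L * J * J + J ^ 2 * L := by
    have : ∀ t, (L * f t - J) ^ 2 = L ^ 2 * f t ^ 2 - (2 * L * J) * f t + J ^ 2 := by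
      intro t; ring
    simp_rw [this]
    rw [intervalIntegral.integral_add (((hint _ (by continuity)).sub (hint _ (by continuity)))) (hint _ (by continuity)),
      intervalIntegral.integral_sub (hint _ (by continuity)) (hint _ (by continuity)),
      intervalIntegral.integral_const_mul, intervalIntegral.integral_const_mul,
      intervalIntegral.integral_const]
    rw [← hJ, ← hI]; simp [smul_eq_mul]; ring
  rcases eq_or_lt_of_le hab with heq | hlt
  · subst heq; simp [hJ, hL, intervalIntegral.integral_same]
  · have hLpos : 0 < L := by simp [hL]; linarith
    nlinarith [h0, hexp]


set_option maxHeartbeats 2000000 in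
/-- Consistency estimate for the variable-step BDF2-TF operator `𝒜`:
`‖𝒜(u)/k₁ − u'(t₁)‖² ≤ C k₁⁵ ∫ ‖u⁗‖²`. -/
theorem bdf2tf_consistency_A (τ τ' : ℝ) (hτ : 0 < τ) (hτ' : 0 < τ') :
    ∃ C > 0, ∀ (E : Type) (_ : NormedAddCommGroup E) (_ : InnerProductSpace ℝ E)
      (_ : CompleteSpace E),
      ∀ (tm2 tm1 t0 t1 : ℝ), tm2 < tm1 → tm1 < t0 → t0 < t1 →
      ∀ (k1 k0 km1 : ℝ), k1 = t1 - t0 → k0 = t0 - tm1 → km1 = tm1 - tm2 →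
      k1 / k0 = τ → k0 / km1 = τ' →
      ∀ u : ℝ → E, ContDiff ℝ 4 u →
      ‖(1 / k1) • (beta3 τ τ' • (u t1 - u t0) - beta2 τ τ' • (u t0 - u tm1)
          + beta1 τ τ' • (u tm1 - u tm2)) - deriv u t1‖ ^ 2
        ≤ C * k1 ^ 5 * ∫ t in tm2..t1, ‖iteratedDeriv 4 u t‖ ^ 2 := by
  have hβ3 : 0 < beta3 τ τ' := by unfold beta3; positivity
  have hβ2 : 0 ≤ beta2 τ τ' := by unfold beta2; positivity
  have hβ1 : 0 ≤ beta1 τ τ' := by unfold beta1; positivity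
  set B := (beta3 τ τ' + beta2 τ τ') + ((beta2 τ τ' + beta1 τ τ') + beta1 τ τ') with hB
  have hBpos : 0 < B := by positivity
  set M := (τ * τ' + τ' + 1) / (τ * τ') with hM
  have hMpos : 0 < M := by positivity
  refine ⟨B ^ 2 * M ^ 7 / 36, by positivity, ?_⟩
  intro E _ _ _ tm2 tm1 t0 t1 h2 h1 h0 k1 k0 km1 hk1 hk0 hkm1 hr1 hr0 u hu
  have hkm1pos : 0 < km1 := by rw [hkm1]; linarith
  have hk0pos : 0 < k0 := by rw [hk0]; linarith
  have hk1pos : 0 < k1 := by rw [hk1]; linarith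
  have hk0e : k0 = τ' * km1 := by
    field_simp [ne_of_gt hkm1pos] at hr0; linarith
  have hk1e : k1 = τ * τ' * km1 := by
    field_simp [ne_of_gt hk0pos] at hr1; rw [hk0e] at hr1; linarith
  have hd0 : t0 - t1 = -(τ * τ' * km1) := by
    have := hk1; rw [hk1e] at this; linarith
  have hd1 : tm1 - t1 = -(τ * τ' * km1 + τ' * km1) := by
    have h1' := hk0; rw [hk0e] at h1'
    have := hk1; rw [hk1e] at this; linarith
  have hd2 : tm2 - t1 = -(τ * τ' * km1 + τ' * km1 + km1) := by
    have h1' := hk0; rw [hk0e] at h1'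
    have := hk1; rw [hk1e] at this; linarith
  have hcont4 : Continuous (iteratedDeriv 4 u) := hu.continuous_iteratedDeriv 4 le_rfl
  set R0 := ∫ t in t1..t0, ((t0 - t) ^ 3 / 6) • iteratedDeriv 4 u t with hR0def
  set R1 := ∫ t in t1..tm1, ((tm1 - t) ^ 3 / 6) • iteratedDeriv 4 u t with hR1def
  set R2 := ∫ t in t1..tm2, ((tm2 - t) ^ 3 / 6) • iteratedDeriv 4 u t with hR2def
  have e0 := taylor_rem u hu t1 t0
  have e1 := taylor_rem u hu t1 tm1
  have e2 := taylor_rem u hu t1 tm2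
  rw [← hR0def] at e0; rw [← hR1def] at e1; rw [← hR2def] at e2
  have hne1 : (1 + τ) ≠ 0 := by positivity
  have hne2 : (1 + τ') ≠ 0 := by positivity
  have hne3 : (1 + τ' * (1 + τ)) ≠ 0 := by positivity
  have hneτ : τ ≠ 0 := ne_of_gt hτ
  have hneτ' : τ' ≠ 0 := ne_of_gt hτ'
  have hnekm1 : km1 ≠ 0 := ne_of_gt hkm1pos
  have hmain : (1 / k1) • (beta3 τ τ' • (u t1 - u t0) - beta2 τ τ' • (u t0 - u tm1)
        + beta1 τ τ' • (u tm1 - u tm2)) - deriv u t1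
      = (1 / k1) • ((-(beta3 τ τ' + beta2 τ τ')) • R0
          + (beta2 τ τ' + beta1 τ τ') • R1 + (-(beta1 τ τ')) • R2) := by
    rw [← iteratedDeriv_one, e0, e1, e2, hd0, hd1, hd2, hk1e]
    unfold beta3 beta2 beta1
    match_scalars <;> field_simp <;> ring
  set c := t1 - tm2 with hc
  have hcpos : 0 < c := by rw [hc]; linarith
  set J := ∫ t in tm2..t1, ‖iteratedDeriv 4 u t‖ with hJ
  have hJnn : 0 ≤ J :=
    intervalIntegral.integral_nonneg (by linarith) (fun t _ => norm_nonneg _)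
  have hb0 : ‖R0‖ ≤ (c ^ 3 / 6) * J := rem_bound u hu tm2 t1 t0 (by linarith) (by linarith)
  have hb1 : ‖R1‖ ≤ (c ^ 3 / 6) * J := rem_bound u hu tm2 t1 tm1 (by linarith) (by linarith)
  have hb2 : ‖R2‖ ≤ (c ^ 3 / 6) * J := rem_bound u hu tm2 t1 tm2 (by linarith) (by linarith)
  have hnorm : ‖(1 / k1) • (beta3 τ τ' • (u t1 - u t0) - beta2 τ τ' • (u t0 - u tm1)
        + beta1 τ τ' • (u tm1 - u tm2)) - deriv u t1‖
      ≤ (1 / k1) * (B * ((c ^ 3 / 6) * J)) := by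
    rw [hmain, norm_smul]
    have habs : ‖(1:ℝ) / k1‖ = 1 / k1 := by
      rw [Real.norm_eq_abs, abs_of_pos (by positivity)]
    rw [habs]
    apply mul_le_mul_of_nonneg_left _ (by positivity)
    calc ‖(-(beta3 τ τ' + beta2 τ τ')) • R0 + (beta2 τ τ' + beta1 τ τ') • R1
          + (-(beta1 τ τ')) • R2‖
        ≤ ‖(-(beta3 τ τ' + beta2 τ τ')) • R0 + (beta2 τ τ' + beta1 τ τ') • R1‖
            + ‖(-(beta1 τ τ')) • R2‖ := norm_add_le _ _
      _ ≤ (‖(-(beta3 τ τ' + beta2 τ τ')) • R0‖ + ‖(beta2 τ τ' + beta1 τ τ') • R1‖)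
            + ‖(-(beta1 τ τ')) • R2‖ := by
          exact add_le_add_left (norm_add_le _ _) _
      _ = (beta3 τ τ' + beta2 τ τ') * ‖R0‖ + (beta2 τ τ' + beta1 τ τ') * ‖R1‖
            + beta1 τ τ' * ‖R2‖ := by
          rw [norm_smul, norm_smul, norm_smul, Real.norm_eq_abs, Real.norm_eq_abs,
            Real.norm_eq_abs, abs_neg, abs_neg, abs_of_nonneg (by positivity),
            abs_of_nonneg (by positivity), abs_of_nonneg (by positivity)]
      _ ≤ (beta3 τ τ' + beta2 τ τ') * ((c ^ 3 / 6) * J)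
            + (beta2 τ τ' + beta1 τ τ') * ((c ^ 3 / 6) * J)
            + beta1 τ τ' * ((c ^ 3 / 6) * J) := by
          gcongr
      _ = B * ((c ^ 3 / 6) * J) := by rw [hB]; ring
  set I := ∫ t in tm2..t1, ‖iteratedDeriv 4 u t‖ ^ 2 with hI
  have hInn : 0 ≤ I :=
    intervalIntegral.integral_nonneg (by linarith) (fun t _ => sq_nonneg _)
  have hCS : J ^ 2 ≤ c * I := by
    have := sq_integral_le (fun t => ‖iteratedDeriv 4 u t‖) hcont4.norm
      (a := tm2) (b := t1) (by linarith)
    simpa [← hJ, ← hI, ← hc] using this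
  have hcval : c = τ * τ' * km1 + τ' * km1 + km1 := by rw [hc]; linarith [hd2]
  have hceq : c = k1 * M := by
    rw [hcval, hM, hk1e]; field_simp
  calc ‖(1 / k1) • (beta3 τ τ' • (u t1 - u t0) - beta2 τ τ' • (u t0 - u tm1)
        + beta1 τ τ' • (u tm1 - u tm2)) - deriv u t1‖ ^ 2
      ≤ ((1 / k1) * (B * ((c ^ 3 / 6) * J))) ^ 2 :=
        pow_le_pow_left₀ (norm_nonneg _) hnorm 2
    _ = (1 / k1) ^ 2 * B ^ 2 * (c ^ 6 / 36) * J ^ 2 := by ring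
    _ ≤ (1 / k1) ^ 2 * B ^ 2 * (c ^ 6 / 36) * (c * I) := by
        apply mul_le_mul_of_nonneg_left hCS (by positivity)
    _ = B ^ 2 * M ^ 7 / 36 * k1 ^ 5 * I := by
        rw [hceq]
        field_simp
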